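/- Fix m ≥ 2, cardinal utilities v_1 > v_2 > ⋯ > v_m, and a loss-dominance parameter Λ ≥ 0. The true ROL (1,2,…,m) is optimal for every attainability distribution P if and only if Λ ≤ 1. -/

import Mathlib

open Finset

/-- An attainability distribution over states `A : Fin (m+2) → Bool`:
nonnegative, sums to one, and the outside option (school `m+2`, the last one)
is always attainable. -/
def IsAttDist {m : ℕ} (P : (Fin (m + 2) → Bool) → ℝ) : Prop :=
  (∀ A, 0 ≤ P A) ∧ (∑ A : Fin (m + 2) → Bool, P A = 1) ∧
    ∀ A : Fin (m + 2) → Bool, A (Fin.last (m + 1)) = false → P A = 0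

/-- Full support: every state in which the outside option is attainable has
strictly positive probability. -/
def FullSupport {m : ℕ} (P : (Fin (m + 2) → Bool) → ℝ) : Prop :=
  ∀ A : Fin (m + 2) → Bool, A (Fin.last (m + 1)) = true → 0 < P A

/-- Match probability of school `s` under ROL `ρ` (where `ρ k` is the school
ranked in position `k`): the probability that `s` is attainable and no school
ranked before `s` is attainable. -/
def matchProb {m : ℕ} (P : (Fin (m + 2) → Bool) → ℝ)
    (ρ : Equiv.Perm (Fin (m + 2))) (s : Fin (m + 2)) : ℝ :=
  ∑ A : Fin (m + 2) → Bool,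
    if A s = true ∧ ∀ ℓ, ℓ < ρ.symm s → A (ρ ℓ) = false then P A else 0

/-- Reference-dependent expected utility of a lottery `f` with loss dominance `Λ`. -/
def utility {m : ℕ} (Λ : ℝ) (v f : Fin (m + 2) → ℝ) : ℝ :=
  (∑ s, f s * v s) -
    Λ * ∑ s, ∑ r ∈ Finset.univ.filter (fun r => s < r), f s * f r * (v s - v r)

/-- An ROL is strictly optimal if its utility strictly exceeds that of every ROL
inducing a different vector of match probabilities. -/
def StrictlyOptimal {m : ℕ} (Λ : ℝ) (v : Fin (m + 2) → ℝ)
    (P : (Fin (m + 2) → Bool) → ℝ) (ρ : Equiv.Perm (Fin (m + 2))) : Prop :=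
  ∀ ρ' : Equiv.Perm (Fin (m + 2)), matchProb P ρ' ≠ matchProb P ρ →
    utility Λ v (matchProb P ρ') < utility Λ v (matchProb P ρ)

/-- An ROL is (weakly) optimal if its utility is weakly greater than that of
every other ROL. -/
def Optimal {m : ℕ} (Λ : ℝ) (v : Fin (m + 2) → ℝ)
    (P : (Fin (m + 2) → Bool) → ℝ) (ρ : Equiv.Perm (Fin (m + 2))) : Prop :=
  ∀ ρ' : Equiv.Perm (Fin (m + 2)),
    utility Λ v (matchProb P ρ') ≤ utility Λ v (matchProb P ρ)

/-- Top-rank monotonicity of an ROL `ρ` (`ρ k` = school at rank `k`; lower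
school label = more preferred). -/
def TopRankMonotone {m : ℕ} (ρ : Equiv.Perm (Fin (m + 2))) : Prop :=
  (∀ k i : Fin (m + 2), ρ k < ρ 0 → ρ i < ρ k → k < i) ∧
    ∀ l j : Fin (m + 2), ρ 0 < ρ l → ρ j < ρ l → j < l

/-!
Summation by parts writes the utility of a lottery `f` as
`v_last + ∑ₜ (v_t - v_{t+1}) w(F t)`, where `F t` is the probability of matching with one of the
first `t + 1` schools and `w x = x - Λ x (1 - x)`. The true ROL maximises every `F t`: whenever
some ROL matches a student with a school `≤ t`, a school `≤ t` is attainable, and the true ROL then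
matches with one. For `0 ≤ Λ ≤ 1` the weight `w` is nondecreasing on `[0, ∞)`, so the true ROL is
optimal. For `Λ > 1`, `w` is negative near `0`: if the top school is attainable with a small
probability `p` and otherwise only the safe school is, ranking the safe school first secures
`v_last`, while the true ROL yields `v_last + (v_0 - v_last) w(p) < v_last`.
-/

section PartialSums

variable (F V : ℕ → ℝ)

theorem sum_range_succ_mul_eq_abel (n : ℕ) :
    ∑ i ∈ range (n + 1), F i * V i =
      (∑ j ∈ range (n + 1), F j) * V n +
        ∑ t ∈ range n, (V t - V (t + 1)) * ∑ j ∈ range (t + 1), F j := by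
  induction n with
  | zero => simp
  | succ n ih =>
    rw [sum_range_succ (fun i => F i * V i), ih, sum_range_succ F (n + 1),
      sum_range_succ (fun t => (V t - V (t + 1)) * ∑ j ∈ range (t + 1), F j)]
    ring

theorem sum_range_sum_range_mul_sub_eq (n : ℕ) :
    ∑ r ∈ range (n + 1), ∑ s ∈ range r, F s * F r * (V s - V r) =
      ∑ t ∈ range n, (V t - V (t + 1)) *
        ((∑ j ∈ range (t + 1), F j) * (∑ j ∈ range (n + 1), F j - ∑ j ∈ range (t + 1), F j)) := by
  induction n with
  | zero => simp
  | succ n ih =>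
    set c : ℕ → ℝ := fun t => ∑ j ∈ range (t + 1), F j with hc
    have hrow : ∑ s ∈ range (n + 1), F s * F (n + 1) * (V s - V (n + 1)) =
        F (n + 1) * (∑ s ∈ range (n + 1), F s * V s) - F (n + 1) * c n * V (n + 1) := by
      simp only [hc, mul_sum, sum_mul, ← sum_sub_distrib]
      exact sum_congr rfl fun _ _ => by ring
    have hsplit : ∑ t ∈ range (n + 1), (V t - V (t + 1)) * (c t * (c (n + 1) - c t)) =
        ∑ t ∈ range n, (V t - V (t + 1)) * (c t * (c n - c t)) +
          F (n + 1) * ∑ t ∈ range (n + 1), (V t - V (t + 1)) * c t := by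
      have hcn : c (n + 1) = c n + F (n + 1) := sum_range_succ F (n + 1)
      rw [mul_sum,
        ← sum_range_succ_sub_top (f := fun t => (V t - V (t + 1)) * (c t * (c n - c t))),
        sub_self, mul_zero, mul_zero, sub_zero, ← sum_add_distrib]
      exact sum_congr rfl fun _ _ => by rw [hcn]; ring
    rw [sum_range_succ _ (n + 1), ih, hrow, hsplit, sum_range_succ_mul_eq_abel F V n,
      sum_range_succ (fun t => (V t - V (t + 1)) * c t)]
    ring

end PartialSums

namespace Fin

variable {M : Type*} [AddCommMonoid M] {n : ℕ}

theorem sum_Iio_val (g : ℕ → M) (r : Fin n) : ∑ s ∈ Iio r, g s = ∑ j ∈ range r, g j := by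
  rw [← Nat.Iio_eq_range, ← map_valEmbedding_Iio, sum_map, valEmbedding_apply]

theorem sum_Iic_val (g : ℕ → M) (t : Fin n) : ∑ s ∈ Iic t, g s = ∑ j ∈ range (t + 1), g j := by
  rw [Nat.range_succ_eq_Iic, ← map_valEmbedding_Iic, sum_map, valEmbedding_apply]

end Fin

def cdfWeight (Λ x : ℝ) : ℝ := x - Λ * (x * (1 - x))

theorem utility_eq_sum_range {m : ℕ} (Λ : ℝ) (F V : ℕ → ℝ) :
    utility Λ (fun s : Fin (m + 2) => V s) (fun s => F s) =
      ∑ i ∈ range (m + 2), F i * V i -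
        Λ * ∑ r ∈ range (m + 2), ∑ s ∈ range r, F s * F r * (V s - V r) := by
  unfold utility
  rw [sum_comm' (t' := univ) (s' := fun r => Iio r) (by simp)]
  rw [Fin.sum_univ_eq_sum_range (fun i => F i * V i),
    ← Fin.sum_univ_eq_sum_range (fun r => ∑ s ∈ range r, F s * F r * (V s - V r))]
  simp only [← Fin.sum_Iio_val]

theorem utility_eq_add_sum_cdfWeight {m : ℕ} (Λ : ℝ) (v f : Fin (m + 2) → ℝ)
    (hf : ∑ s, f s = 1) :
    utility Λ v f = v (Fin.last (m + 1)) +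
      ∑ t : Fin (m + 1), (v t.castSucc - v t.succ) * cdfWeight Λ (∑ s ∈ Iic t.castSucc, f s) := by
  obtain ⟨F, rfl⟩ : ∃ F : ℕ → ℝ, f = fun s : Fin (m + 2) => F s :=
    ⟨Function.extend Fin.val f 0, funext fun s => (Fin.val_injective.extend_apply f 0 s).symm⟩
  obtain ⟨V, rfl⟩ : ∃ V : ℕ → ℝ, v = fun s : Fin (m + 2) => V s :=
    ⟨Function.extend Fin.val v 0, funext fun s => (Fin.val_injective.extend_apply v 0 s).symm⟩
  rw [Fin.sum_univ_eq_sum_range F] at hf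
  simp only [Fin.sum_Iic_val F, Fin.val_castSucc, Fin.val_succ, Fin.val_last]
  rw [utility_eq_sum_range, sum_range_succ_mul_eq_abel, sum_range_sum_range_mul_sub_eq, hf,
    Fin.sum_univ_eq_sum_range (fun t => (V t - V (t + 1)) * cdfWeight Λ (∑ j ∈ range (t + 1), F j)),
    mul_sum, one_mul, add_sub_assoc, ← sum_sub_distrib]
  exact congrArg _ (sum_congr rfl fun _ _ => by unfold cdfWeight; ring)

theorem monotoneOn_cdfWeight {Λ : ℝ} (h₀ : 0 ≤ Λ) (h₁ : Λ ≤ 1) :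
    MonotoneOn (cdfWeight Λ) (Set.Ici 0) := by
  intro x hx y hy hxy
  have hdiff : 0 ≤ (y - x) * (1 - Λ + Λ * (x + y)) := by
    have := mul_nonneg h₀ (add_nonneg (Set.mem_Ici.1 hx) (Set.mem_Ici.1 hy))
    exact mul_nonneg (sub_nonneg.2 hxy) (by linarith)
  unfold cdfWeight; linarith

theorem exists_cdfWeight_neg {Λ : ℝ} (h : 1 < Λ) : ∃ p, 0 ≤ p ∧ p ≤ 1 ∧ cdfWeight Λ p < 0 := by
  set p := (Λ - 1) / (2 * Λ) with hp
  have hp₀ : 0 < p := div_pos (by linarith) (by linarith)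
  have hΛp : Λ * (1 - p) = (Λ + 1) / 2 := by rw [hp]; field_simp; ring
  refine ⟨p, hp₀.le, by rw [hp, div_le_one (by linarith)]; linarith, ?_⟩
  calc cdfWeight Λ p = p * ((1 - Λ) / 2) := by rw [cdfWeight, mul_comm p, ← mul_assoc, hΛp]; ring
    _ < 0 := mul_neg_of_pos_of_neg hp₀ (by linarith)

section MatchProb

variable {m : ℕ}

def IsFirstAttainable (ρ : Equiv.Perm (Fin (m + 2))) (A : Fin (m + 2) → Bool)
    (s : Fin (m + 2)) : Prop :=
  A s = true ∧ ∀ ℓ, ℓ < ρ.symm s → A (ρ ℓ) = false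

instance (ρ : Equiv.Perm (Fin (m + 2))) (A : Fin (m + 2) → Bool) :
    DecidablePred (IsFirstAttainable ρ A) :=
  fun _ => inferInstanceAs (Decidable (_ ∧ _))

variable {ρ : Equiv.Perm (Fin (m + 2))} {A : Fin (m + 2) → Bool}

theorem IsFirstAttainable.eq {s s' : Fin (m + 2)} (h : IsFirstAttainable ρ A s)
    (h' : IsFirstAttainable ρ A s') : s = s' := by
  rcases lt_trichotomy (ρ.symm s) (ρ.symm s') with hlt | heq | hgt
  · simpa [h.1] using h'.2 _ hlt
  · exact ρ.symm.injective heq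
  · simpa [h'.1] using h.2 _ hgt

theorem IsFirstAttainable.iff_eq {s₀ : Fin (m + 2)} (h : IsFirstAttainable ρ A s₀)
    (s : Fin (m + 2)) : IsFirstAttainable ρ A s ↔ s = s₀ :=
  ⟨fun h' => h'.eq h, fun hs => hs ▸ h⟩

theorem exists_isFirstAttainable {s : Fin (m + 2)} (hs : A s = true) :
    ∃ s', IsFirstAttainable ρ A s' ∧ ρ.symm s' ≤ ρ.symm s := by
  obtain ⟨k, hk, hmin⟩ := (univ.filter fun k => A (ρ k) = true).exists_min_image id
    ⟨ρ.symm s, by simpa using hs⟩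
  refine ⟨ρ k, ⟨(mem_filter.1 hk).2, fun ℓ hℓ => ?_⟩, by simpa using hmin _ (by simpa using hs)⟩
  by_contra hne
  rw [Equiv.symm_apply_apply] at hℓ
  exact absurd (hmin ℓ (by simpa using hne)) (not_le.2 hℓ)

theorem isFirstAttainable_of_apply_zero {s : Fin (m + 2)} (hρ : ρ 0 = s) (hs : A s = true) :
    IsFirstAttainable ρ A s :=
  ⟨hs, fun ℓ hℓ => by simp [← hρ] at hℓ⟩

theorem card_filter_isFirstAttainable_le_one (S : Finset (Fin (m + 2))) :
    #(S.filter (IsFirstAttainable ρ A)) ≤ 1 :=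
  card_le_one.2 fun _ h _ h' => (mem_filter.1 h).2.eq (mem_filter.1 h').2

theorem card_filter_isFirstAttainable_univ (h : A (Fin.last (m + 1)) = true) :
    #(univ.filter (IsFirstAttainable ρ A)) = 1 := by
  obtain ⟨s, hs, -⟩ := exists_isFirstAttainable (ρ := ρ) h
  exact card_eq_one.2 ⟨s, by ext s'; simp [hs.iff_eq]⟩

theorem card_filter_Iic_isFirstAttainable_le (t : Fin (m + 2)) :
    #((Iic t).filter (IsFirstAttainable ρ A)) ≤
      #((Iic t).filter (IsFirstAttainable (Equiv.refl _) A)) := by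
  rcases ((Iic t).filter (IsFirstAttainable ρ A)).eq_empty_or_nonempty with h | ⟨s, hs⟩
  · simp [h]
  rw [mem_filter, mem_Iic] at hs
  obtain ⟨s', hs', hle⟩ := exists_isFirstAttainable (ρ := Equiv.refl _) hs.2.1
  refine (card_filter_isFirstAttainable_le_one _).trans (one_le_card.2 ⟨s', ?_⟩)
  exact mem_filter.2 ⟨mem_Iic.2 (le_trans (by simpa using hle) hs.1), hs'⟩

variable {P : (Fin (m + 2) → Bool) → ℝ}

theorem matchProb_eq_sum (P : (Fin (m + 2) → Bool) → ℝ) (ρ : Equiv.Perm (Fin (m + 2)))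
    (s : Fin (m + 2)) :
    matchProb P ρ s = ∑ A, if IsFirstAttainable ρ A s then P A else 0 :=
  rfl

theorem matchProb_nonneg (hP : ∀ A, 0 ≤ P A) (ρ : Equiv.Perm (Fin (m + 2))) (s : Fin (m + 2)) :
    0 ≤ matchProb P ρ s :=
  sum_nonneg fun A _ => ite_nonneg (hP A) le_rfl

theorem sum_matchProb_eq_sum_card (P : (Fin (m + 2) → Bool) → ℝ) (ρ : Equiv.Perm (Fin (m + 2)))
    (S : Finset (Fin (m + 2))) :
    ∑ s ∈ S, matchProb P ρ s = ∑ A, #(S.filter (IsFirstAttainable ρ A)) * P A := by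
  simp only [matchProb_eq_sum]
  rw [sum_comm]
  exact sum_congr rfl fun A _ => by rw [← sum_filter, sum_const, nsmul_eq_mul]

theorem sum_matchProb (hP : IsAttDist P) (ρ : Equiv.Perm (Fin (m + 2))) :
    ∑ s, matchProb P ρ s = 1 := by
  rw [sum_matchProb_eq_sum_card, ← hP.2.1]
  refine sum_congr rfl fun A _ => ?_
  cases hA : A (Fin.last (m + 1))
  · simp [hP.2.2 A hA]
  · rw [card_filter_isFirstAttainable_univ hA, Nat.cast_one, one_mul]

theorem sum_Iic_matchProb_le (hP : ∀ A, 0 ≤ P A) (ρ : Equiv.Perm (Fin (m + 2)))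
    (t : Fin (m + 2)) :
    ∑ s ∈ Iic t, matchProb P ρ s ≤ ∑ s ∈ Iic t, matchProb P (Equiv.refl _) s := by
  rw [sum_matchProb_eq_sum_card, sum_matchProb_eq_sum_card]
  exact sum_le_sum fun A _ => mul_le_mul_of_nonneg_right
    (by exact_mod_cast card_filter_Iic_isFirstAttainable_le t) (hP A)

theorem matchProb_add (P Q : (Fin (m + 2) → Bool) → ℝ) (ρ : Equiv.Perm (Fin (m + 2))) :
    matchProb (P + Q) ρ = matchProb P ρ + matchProb Q ρ := by
  ext s
  simp only [matchProb_eq_sum, Pi.add_apply, ite_add_zero, sum_add_distrib]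

theorem matchProb_single (A : Fin (m + 2) → Bool) (c : ℝ) (ρ : Equiv.Perm (Fin (m + 2)))
    (s : Fin (m + 2)) :
    matchProb (Pi.single A c) ρ s = if IsFirstAttainable ρ A s then c else 0 := by
  rw [matchProb_eq_sum, sum_eq_single A (fun A' _ hA' => by simp [hA']) (by simp)]
  simp

end MatchProb

section TwoStates

variable {m : ℕ}

def onlySafe : Fin (m + 2) → Bool := fun i => decide (i = Fin.last (m + 1))

def topAndSafe : Fin (m + 2) → Bool := fun i => decide (i = 0 ∨ i = Fin.last (m + 1))

noncomputable def twoStateDist (p : ℝ) : (Fin (m + 2) → Bool) → ℝ :=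
  Pi.single topAndSafe p + Pi.single onlySafe (1 - p)

theorem isAttDist_twoStateDist {p : ℝ} (hp₀ : 0 ≤ p) (hp₁ : p ≤ 1) :
    IsAttDist (twoStateDist (m := m) p) := by
  refine ⟨fun A => ?_, by simp [twoStateDist, sum_add_distrib], fun A hA => ?_⟩ <;>
    simp only [twoStateDist, Pi.add_apply, Pi.single_apply]
  · exact add_nonneg (ite_nonneg hp₀ le_rfl) (ite_nonneg (sub_nonneg.2 hp₁) le_rfl)
  rw [if_neg, if_neg, add_zero] <;> rintro rfl <;> simp [onlySafe, topAndSafe] at hA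

theorem matchProb_twoStateDist {ρ : Equiv.Perm (Fin (m + 2))} {s₁ s₂ : Fin (m + 2)}
    (h₁ : IsFirstAttainable ρ topAndSafe s₁) (h₂ : IsFirstAttainable ρ onlySafe s₂) (p : ℝ) :
    matchProb (twoStateDist p) ρ = Pi.single s₁ p + Pi.single s₂ (1 - p) := by
  ext s
  simp only [twoStateDist, matchProb_add, Pi.add_apply, matchProb_single, h₁.iff_eq, h₂.iff_eq,
    Pi.single_apply]

theorem matchProb_twoStateDist_refl (p : ℝ) :
    matchProb (twoStateDist p) (Equiv.refl (Fin (m + 2))) =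
      Pi.single 0 p + Pi.single (Fin.last (m + 1)) (1 - p) :=
  matchProb_twoStateDist (isFirstAttainable_of_apply_zero rfl (by simp [topAndSafe]))
    ⟨by simp [onlySafe], fun ℓ hℓ => by simp [onlySafe, (show ℓ < Fin.last (m + 1) from hℓ).ne]⟩
    p

theorem matchProb_twoStateDist_swap (p : ℝ) :
    matchProb (twoStateDist p) (Equiv.swap 0 (Fin.last (m + 1))) =
      Pi.single (Fin.last (m + 1)) p + Pi.single (Fin.last (m + 1)) (1 - p) :=
  matchProb_twoStateDist (isFirstAttainable_of_apply_zero (Equiv.swap_apply_left _ _)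
    (by simp [topAndSafe])) (isFirstAttainable_of_apply_zero (Equiv.swap_apply_left _ _)
    (by simp [onlySafe])) p

theorem sum_Iic_castSucc_single_add_single_last (i : Fin (m + 2)) (a b : ℝ) (t : Fin (m + 1)) :
    ∑ s ∈ Iic t.castSucc, (Pi.single i a + Pi.single (Fin.last (m + 1)) b : Fin (m + 2) → ℝ) s =
      if i ≤ t.castSucc then a else 0 := by
  simp [sum_add_distrib, sum_pi_single']

theorem utility_twoStateDist_refl_lt_swap {Λ p : ℝ} {v : Fin (m + 2) → ℝ} (hv : StrictAnti v)
    (hp₀ : 0 ≤ p) (hp₁ : p ≤ 1) (hw : cdfWeight Λ p < 0) :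
    utility Λ v (matchProb (twoStateDist p) (Equiv.refl _)) <
      utility Λ v (matchProb (twoStateDist p) (Equiv.swap 0 (Fin.last (m + 1)))) := by
  have hP := isAttDist_twoStateDist (m := m) hp₀ hp₁
  rw [utility_eq_add_sum_cdfWeight _ _ _ (sum_matchProb hP _),
    utility_eq_add_sum_cdfWeight _ _ _ (sum_matchProb hP _), matchProb_twoStateDist_swap,
    matchProb_twoStateDist_refl]
  simp only [sum_Iic_castSucc_single_add_single_last, Fin.zero_le, if_true,
    not_le.2 (Fin.castSucc_lt_last _), if_false]
  have hw₀ : cdfWeight Λ 0 = 0 := by simp [cdfWeight]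
  have hneg : ∑ t : Fin (m + 1), (v t.castSucc - v t.succ) * cdfWeight Λ p < 0 :=
    sum_neg (fun t _ => mul_neg_of_pos_of_neg (sub_pos.2 (hv Fin.castSucc_lt_succ)) hw)
      univ_nonempty
  simp only [hw₀, mul_zero, sum_const_zero, add_zero]
  linarith

end TwoStates

theorem optimal_refl {m : ℕ} {Λ : ℝ} (h₀ : 0 ≤ Λ) (h₁ : Λ ≤ 1) {v : Fin (m + 2) → ℝ}
    (hv : Antitone v) {P : (Fin (m + 2) → Bool) → ℝ} (hP : IsAttDist P) :
    Optimal Λ v P (Equiv.refl _) := by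
  intro ρ
  rw [utility_eq_add_sum_cdfWeight _ _ _ (sum_matchProb hP _),
    utility_eq_add_sum_cdfWeight _ _ _ (sum_matchProb hP _)]
  refine add_le_add le_rfl (sum_le_sum fun t _ => mul_le_mul_of_nonneg_left ?_
    (sub_nonneg.2 (hv Fin.castSucc_lt_succ.le)))
  exact monotoneOn_cdfWeight h₀ h₁ (sum_nonneg fun s _ => matchProb_nonneg hP.1 _ s)
    (sum_nonneg fun s _ => matchProb_nonneg hP.1 _ s) (sum_Iic_matchProb_le hP.1 ρ _)

/-- with fixed `m ≥ 2`, strictly decreasing cardinal utilities and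
loss dominance `Λ ≥ 0`, the true ROL (the identity) is optimal for every
attainability distribution if and only if `Λ ≤ 1`. -/
theorem stmt_14 (m : ℕ) (Λ : ℝ) (hΛ : 0 ≤ Λ) (v : Fin (m + 2) → ℝ)
    (hv : StrictAnti v) :
    (∀ P : (Fin (m + 2) → Bool) → ℝ, IsAttDist P →
        Optimal Λ v P (Equiv.refl (Fin (m + 2)))) ↔ Λ ≤ 1 := by
  refine ⟨fun hopt => ?_, fun hΛ₁ P hP => optimal_refl hΛ hΛ₁ hv.antitone hP⟩
  by_contra! hΛ₁
  obtain ⟨p, hp₀, hp₁, hw⟩ := exists_cdfWeight_neg hΛ₁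
  exact (utility_twoStateDist_refl_lt_swap hv hp₀ hp₁ hw).not_ge
    (hopt _ (isAttDist_twoStateDist hp₀ hp₁) _)
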